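/- Let s be a string with periodicity w, |s| > 2w, and suppose s is a prefix of y^∞ for a string y of length w (so w is a periodicity of s). If period(s) < w, then w is an integer multiple of period(s) and y^∞ = pref(s,s)^∞. -/
import Mathlib


/-- A string `s` has periodicity `p` if `s[i] = s[i+p]` for all valid indices. -/
def hasPeriod {α : Type*} (s : List α) (p : ℕ) : Prop :=
  ∀ i, i + p < s.length → s[i]? = s[i + p]?

/-- `periodN s` is the smallest positive periodicity of `s`, i.e. `|pref(s,s)|`;
`s.take (periodN s)` is the string `pref(s,s)`. -/
noncomputable def periodN {α : Type*} (s : List α) : ℕ :=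
  sInf {p | 0 < p ∧ hasPeriod s p}

/-- `infWordO y` models the semi-infinite string `y^∞` (for nonempty `y`). -/
def infWordO {α : Type*} (y : List α) : ℕ → Option α := fun n => y[n % y.length]?

lemma hasPeriod_sub {α : Type*} {s : List α} {p q : ℕ} (hp : hasPeriod s p)
    (hq : hasPeriod s q) (hle : p ≤ q) (hlen : p + q ≤ s.length) :
    hasPeriod s (q - p) := by
  intro i hi
  rcases lt_or_ge (i + q) s.length with h | h
  · calc s[i]? = s[i + q]? := hq i h
      _ = s[(i + (q - p)) + p]? := by congr 1; omega
      _ = s[i + (q - p)]? := (hp _ (by omega)).symm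
  · calc s[i]? = s[(i - p) + p]? := by congr 1; omega
      _ = s[i - p]? := (hp (i - p) (by omega)).symm
      _ = s[(i - p) + q]? := hq (i - p) (by omega)
      _ = s[i + (q - p)]? := by congr 1; omega

lemma hasPeriod_gcd {α : Type*} (s : List α) :
    ∀ n p q, p + q = n → hasPeriod s p → hasPeriod s q → p + q ≤ s.length →
      hasPeriod s (Nat.gcd p q) := by
  intro n
  induction n using Nat.strong_induction_on with
  | _ n ih =>
    intro p q hn hp hq hlen
    rcases Nat.eq_zero_or_pos p with h0 | hp0
    · subst h0; simpa using hq
    rcases Nat.eq_zero_or_pos q with h0 | hq0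
    · subst h0; simpa using hp
    rcases le_total p q with hle | hle
    · have hsub := hasPeriod_sub hp hq hle hlen
      have := ih (p + (q - p)) (by omega) p (q - p) rfl hp hsub (by omega)
      rwa [Nat.gcd_sub_self_right hle] at this
    · have hsub := hasPeriod_sub hq hp hle (by omega)
      have := ih (q + (p - q)) (by omega) q (p - q) rfl hq hsub (by omega)
      rwa [Nat.gcd_sub_self_right hle, Nat.gcd_comm] at this

lemma hasPeriod_mod {α : Type*} {s : List α} {p : ℕ} (hp0 : 0 < p) (hp : hasPeriod s p) :
    ∀ i, i < s.length → s[i]? = s[i % p]? := by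
  intro i
  induction i using Nat.strong_induction_on with
  | _ i ih =>
    intro hi
    rcases lt_or_ge i p with h | h
    · rw [Nat.mod_eq_of_lt h]
    · calc s[i]? = s[(i - p) + p]? := by congr 1; omega
        _ = s[i - p]? := (hp (i - p) (by omega)).symm
        _ = s[(i - p) % p]? := ih (i - p) (by omega) (by omega)
        _ = s[i % p]? := by
            conv_rhs => rw [show i = (i - p) + p from by omega]
            rw [Nat.add_mod_right]

/-- Let `s` be a prefix of `y^∞` where `|y| = w` (so `w` is a periodicity of `s`) and
`|s| > 2w`. If `period(s) < w`, then `w` is an integer multiple of `period(s)` and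
`y^∞ = pref(s,s)^∞`. -/
theorem period_dvd_and_infWord_eq {α : Type*} (s y : List α) (w : ℕ) (hw : 0 < w)
    (hy : y.length = w)
    (hpre : ∀ i < s.length, s[i]? = infWordO y i)
    (hlen : 2 * w < s.length)
    (hplt : periodN s < w) :
    periodN s ∣ w ∧ infWordO y = infWordO (s.take (periodN s)) := by
  have hperw : hasPeriod s w := by
    intro i hi
    rw [hpre i (by omega), hpre (i + w) hi]
    unfold infWordO
    rw [hy, Nat.add_mod_right]
  have hmem : periodN s ∈ {p | 0 < p ∧ hasPeriod s p} :=
    Nat.sInf_mem ⟨w, hw, hperw⟩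
  obtain ⟨hp0, hper⟩ := hmem
  set p := periodN s with hpdef
  have hg : hasPeriod s (Nat.gcd p w) :=
    hasPeriod_gcd s (p + w) p w rfl hper hperw (by omega)
  have hg0 : 0 < Nat.gcd p w := Nat.gcd_pos_of_pos_left _ hp0
  have hle : p ≤ Nat.gcd p w := Nat.sInf_le ⟨hg0, hg⟩
  have hgcd : Nat.gcd p w = p := le_antisymm (Nat.gcd_le_left _ hp0) hle
  have hdvd : p ∣ w := hgcd ▸ Nat.gcd_dvd_right p w
  refine ⟨hdvd, ?_⟩
  funext n
  have htl : (s.take p).length = p := by rw [List.length_take]; omega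
  unfold infWordO
  rw [htl, hy]
  have hnw : n % w < s.length := by have := Nat.mod_lt n hw; omega
  calc y[n % w]? = s[n % w]? := by
        rw [hpre (n % w) hnw]
        unfold infWordO
        rw [hy, Nat.mod_mod_of_dvd n dvd_rfl]
    _ = s[(n % w) % p]? := hasPeriod_mod hp0 hper _ hnw
    _ = s[n % p]? := by rw [Nat.mod_mod_of_dvd n hdvd]
    _ = (s.take p)[n % p]? := by
        rw [List.getElem?_take, if_pos (Nat.mod_lt n hp0)]
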